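/- The union of an arbitrary family of MVE-algebras generates an MVE-algebra: if {Â_γ : γ ∈ Γ} is the collection of all MVE-algebras of a model, then σ(Â_γ : γ ∈ Γ) is the maximal MVE-algebra. -/

import Mathlib

open MeasureTheory ProbabilityTheory

/-- `χ` is a square-integrable unbiased estimator of zero for the family `P`. -/
def IsUEZero {𝓧 Θ : Type*} [MeasurableSpace 𝓧] (P : Θ → Measure 𝓧) (χ : 𝓧 → ℝ) : Prop :=
  Measurable χ ∧ (∀ θ, MemLp χ 2 (P θ)) ∧ ∀ θ, ∫ x, χ x ∂P θ = 0

/-- `g` is a UMVUE: minimal variance at every `θ` among all unbiased estimators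
(with finite second moments) of the same parametric function. -/
def IsUMVUE {𝓧 Θ : Type*} [MeasurableSpace 𝓧] (P : Θ → Measure 𝓧) (g : 𝓧 → ℝ) : Prop :=
  Measurable g ∧ (∀ θ, MemLp g 2 (P θ)) ∧
    ∀ g' : 𝓧 → ℝ, Measurable g' → (∀ θ, MemLp g' 2 (P θ)) →
      (∀ θ, ∫ x, g' x ∂P θ = ∫ x, g x ∂P θ) →
      ∀ θ, variance g (P θ) ≤ variance g' (P θ)

/-- A sub-σ-algebra `𝓐` of the basic σ-algebra `m` is an MVE-algebra for the family `P`
if every `𝓐`-measurable statistic with finite second moments under every `P θ`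
is a UMVUE of its expectation. -/
def IsMVEAlgebra {𝓧 Θ : Type*} [m : MeasurableSpace 𝓧] (P : Θ → Measure 𝓧)
    (𝓐 : MeasurableSpace 𝓧) : Prop :=
  𝓐 ≤ m ∧
    ∀ g : 𝓧 → ℝ, Measurable[𝓐] g → (∀ θ, MemLp g 2 (P θ)) → @IsUMVUE 𝓧 Θ m P g

/-!
Write `𝒰` for the square-integrable unbiased estimators of zero. By the covariance decomposition
`Var (g + t χ) = Var g + 2 t cov(g, χ) + t² Var χ`, a square-integrable statistic `g` is a UMVUE
iff it is uncorrelated with every `χ ∈ 𝒰`. Hence a σ-algebra `𝓐` is an MVE-algebra iff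
`∫_A χ dP_θ = 0` for all `A ∈ 𝓐`, `χ ∈ 𝒰` and `θ`: one direction takes `g = 1_A`, the other
pulls `g` out of the conditional expectation `E_θ[χ | 𝓐] = 0`. The sets with this property form
a σ-algebra (a Dynkin system closed under intersections, since `1_A χ ∈ 𝒰`), which is therefore
the largest MVE-algebra and contains every MVE-algebra, hence their supremum.
-/

lemma covariance_eq_integral_mul_of_integral_eq_zero {Ω : Type*} {mΩ : MeasurableSpace Ω}
    {μ : Measure Ω} [IsProbabilityMeasure μ] {X Y : Ω → ℝ} (hX : MemLp X 2 μ) (hY : MemLp Y 2 μ)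
    (hY0 : ∫ ω, Y ω ∂μ = 0) :
    cov[X, Y; μ] = ∫ ω, X ω * Y ω ∂μ := by
  rw [covariance_eq_sub hX hY, hY0, mul_zero, sub_zero]
  rfl

theorem integral_mul_eq_zero_of_forall_setIntegral_eq_zero {α : Type*} {m m₀ : MeasurableSpace α}
    {μ : Measure α} (hm : m ≤ m₀) [SigmaFinite (μ.trim hm)] {f g : α → ℝ}
    (hf : StronglyMeasurable[m] f) (hfg : Integrable (f * g) μ) (hg : Integrable g μ)
    (h : ∀ s, MeasurableSet[m] s → ∫ x in s, g x ∂μ = 0) :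
    ∫ x, f x * g x ∂μ = 0 := by
  have hcondExp : 0 =ᵐ[μ] μ[g | m] :=
    ae_eq_condExp_of_forall_setIntegral_eq hm hg (fun _ _ _ => integrableOn_zero)
      (fun s hs _ => by simp [h s hs]) aestronglyMeasurable_zero
  calc ∫ x, f x * g x ∂μ = ∫ x, μ[f * g | m] x ∂μ := (integral_condExp hm).symm
    _ = ∫ x, f x * 0 ∂μ := by
        refine integral_congr_ae ?_
        filter_upwards [condExp_mul_of_stronglyMeasurable_left hf hfg hg, hcondExp]
          with x hx hx0
        rw [hx, Pi.mul_apply, ← hx0, Pi.zero_apply]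
    _ = 0 := by simp

section MaxMVEAlgebra

variable {𝓧 Θ : Type*} {m : MeasurableSpace 𝓧} (P : Θ → Measure 𝓧)

def IsUncorrelatedSet (A : Set 𝓧) : Prop :=
  MeasurableSet A ∧ ∀ χ, IsUEZero P χ → ∀ θ, ∫ x in A, χ x ∂P θ = 0

variable {P}

lemma IsUEZero.indicator {χ : 𝓧 → ℝ} (hχ : IsUEZero P χ) {A : Set 𝓧}
    (hA : IsUncorrelatedSet P A) : IsUEZero P (A.indicator χ) :=
  ⟨hχ.1.indicator hA.1, fun θ => (hχ.2.1 θ).indicator hA.1, fun θ => by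
    rw [integral_indicator hA.1]; exact hA.2 χ hχ θ⟩

lemma IsUncorrelatedSet.inter {A B : Set 𝓧} (hA : IsUncorrelatedSet P A)
    (hB : IsUncorrelatedSet P B) : IsUncorrelatedSet P (A ∩ B) :=
  ⟨hA.1.inter hB.1, fun χ hχ θ => by
    rw [Set.inter_comm, ← setIntegral_indicator hA.1]
    exact hB.2 _ (hχ.indicator hA) θ⟩

variable [∀ θ, IsFiniteMeasure (P θ)]

lemma isUEZero_sub_of_integral_eq {g g' : 𝓧 → ℝ} (hg : Measurable g)
    (hg2 : ∀ θ, MemLp g 2 (P θ)) (hg' : Measurable g') (hg'2 : ∀ θ, MemLp g' 2 (P θ))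
    (hmean : ∀ θ, ∫ x, g' x ∂P θ = ∫ x, g x ∂P θ) : IsUEZero P (g' - g) :=
  ⟨hg'.sub hg, fun θ => (hg'2 θ).sub (hg2 θ), fun θ => by
    simp only [Pi.sub_apply]
    rw [integral_sub ((hg'2 θ).integrable one_le_two) ((hg2 θ).integrable one_le_two),
      hmean θ, sub_self]⟩

variable (P)

def uncorrelatedDynkinSystem : MeasurableSpace.DynkinSystem 𝓧 where
  Has := IsUncorrelatedSet P
  has_empty := ⟨.empty, fun _ _ _ => by rw [Measure.restrict_empty, integral_zero_measure]⟩
  has_compl {A} hA := ⟨hA.1.compl, fun χ hχ θ => by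
    have hsplit := integral_add_compl hA.1 ((hχ.2.1 θ).integrable one_le_two)
    rwa [hA.2 χ hχ θ, hχ.2.2 θ, zero_add] at hsplit⟩
  has_iUnion_nat {A} hdisj hA := ⟨.iUnion fun n => (hA n).1, fun χ hχ θ => by
    rw [integral_iUnion (fun n => (hA n).1) hdisj
      ((hχ.2.1 θ).integrable one_le_two).integrableOn]
    simp only [fun n => (hA n).2 χ hχ θ, tsum_zero]⟩

abbrev maxMVEAlgebra : MeasurableSpace 𝓧 :=
  (uncorrelatedDynkinSystem P).toMeasurableSpace fun _ _ => IsUncorrelatedSet.inter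

variable {P}

lemma maxMVEAlgebra_le : maxMVEAlgebra P ≤ m := fun _ hA => hA.1

end MaxMVEAlgebra

section Probability

-- `𝓐` comes before `m` so that instance search finds the ambient σ-algebra `m`.
variable {𝓧 Θ : Type*} {𝓐 m : MeasurableSpace 𝓧} {P : Θ → Measure 𝓧}
  [∀ θ, IsProbabilityMeasure (P θ)]

theorem isUMVUE_iff_forall_integral_mul_eq_zero {g : 𝓧 → ℝ} (hg : Measurable g)
    (hg2 : ∀ θ, MemLp g 2 (P θ)) :
    IsUMVUE P g ↔ ∀ χ, IsUEZero P χ → ∀ θ, ∫ x, g x * χ x ∂P θ = 0 := by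
  constructor
  · rintro ⟨-, -, hmin⟩ χ ⟨hχm, hχ2, hχ0⟩ θ
    rw [← covariance_eq_integral_mul_of_integral_eq_zero (hg2 θ) (hχ2 θ) (hχ0 θ)]
    have hquad : ∀ t : ℝ, 0 ≤ Var[χ; P θ] * (t * t) + 2 * cov[g, χ; P θ] * t + 0 := by
      intro t
      have hunbiased : ∀ θ', ∫ x, (g + t • χ) x ∂P θ' = ∫ x, g x ∂P θ' := fun θ' => by
        simp only [Pi.add_apply, Pi.smul_apply, smul_eq_mul]
        rw [integral_add ((hg2 θ').integrable one_le_two)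
          (((hχ2 θ').const_mul t).integrable one_le_two), integral_const_mul, hχ0 θ',
          mul_zero, add_zero]
      have hle := hmin _ (hg.add (hχm.const_smul t))
        (fun θ' => (hg2 θ').add ((hχ2 θ').const_smul t)) hunbiased θ
      rw [variance_add (hg2 θ) ((hχ2 θ).const_smul t), covariance_smul_right, variance_smul]
        at hle
      linarith
    have hdisc := discrim_le_zero hquad
    rw [discrim] at hdisc
    nlinarith [sq_nonneg cov[g, χ; P θ]]
  · intro huncorr
    refine ⟨hg, hg2, fun g' hg' hg'2 hmean θ => ?_⟩
    have hχ := isUEZero_sub_of_integral_eq hg hg2 hg' hg'2 hmean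
    have hcov : cov[g, g' - g; P θ] = 0 := by
      rw [covariance_eq_integral_mul_of_integral_eq_zero (hg2 θ) (hχ.2.1 θ) (hχ.2.2 θ)]
      exact huncorr _ hχ θ
    calc Var[g; P θ] ≤ Var[g; P θ] + 2 * cov[g, g' - g; P θ] + Var[g' - g; P θ] := by
          rw [hcov]; linarith [variance_nonneg (g' - g) (P θ)]
      _ = Var[g'; P θ] := by rw [← variance_add (hg2 θ) (hχ.2.1 θ), add_sub_cancel]

theorem isMVEAlgebra_iff_le_maxMVEAlgebra : IsMVEAlgebra P 𝓐 ↔ 𝓐 ≤ maxMVEAlgebra P := by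
  constructor
  · rintro ⟨h𝓐, hUMVUE⟩ A hA
    have hAm : MeasurableSet[m] A := h𝓐 A hA
    have hind : ∀ θ, MemLp (A.indicator fun _ => (1 : ℝ)) 2 (P θ) := fun θ =>
      (memLp_const 1).indicator hAm
    have huncorr := (isUMVUE_iff_forall_integral_mul_eq_zero
      (measurable_const.indicator hAm) hind).1 (hUMVUE _ (measurable_const.indicator hA) hind)
    refine ⟨hAm, fun χ hχ θ => ?_⟩
    simpa only [← Set.indicator_mul_left, one_mul, integral_indicator hAm]
      using huncorr χ hχ θ
  · intro h𝓐
    have hg_meas {g : 𝓧 → ℝ} (hg : Measurable[𝓐] g) : Measurable[m] g :=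
      hg.mono (h𝓐.trans maxMVEAlgebra_le) le_rfl
    refine ⟨h𝓐.trans maxMVEAlgebra_le, fun g hg hg2 => ?_⟩
    rw [isUMVUE_iff_forall_integral_mul_eq_zero (hg_meas hg) hg2]
    exact fun χ hχ θ => integral_mul_eq_zero_of_forall_setIntegral_eq_zero maxMVEAlgebra_le
      (hg.mono h𝓐 le_rfl).stronglyMeasurable ((hg2 θ).integrable_mul (hχ.2.1 θ))
      ((hχ.2.1 θ).integrable one_le_two) fun A hA => hA.2 χ hχ θ

end Probability

theorem stmt19 {𝓧 Θ : Type*} [m : MeasurableSpace 𝓧]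
    (P : Θ → Measure 𝓧) [∀ θ, IsProbabilityMeasure (P θ)] :
    @IsMVEAlgebra 𝓧 Θ m P (sSup {𝓐 : MeasurableSpace 𝓧 | @IsMVEAlgebra 𝓧 Θ m P 𝓐}) ∧
    ∀ 𝓑 : MeasurableSpace 𝓧, @IsMVEAlgebra 𝓧 Θ m P 𝓑 →
      𝓑 ≤ sSup {𝓐 : MeasurableSpace 𝓧 | @IsMVEAlgebra 𝓧 Θ m P 𝓐} :=
  ⟨isMVEAlgebra_iff_le_maxMVEAlgebra.2 <|
      sSup_le fun _ h𝓐 => isMVEAlgebra_iff_le_maxMVEAlgebra.1 h𝓐,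
    fun _ h𝓑 => le_sSup h𝓑⟩
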